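/- arXiv:1810.08967 — 3 statements merged into one kernel-verified Lean document; each statement's English description precedes it below -/
import Mathlib

section
/- Let $f,g:\mathbb{N}\to\mathbb{T}$ be completely multiplicative functions and suppose there exist $k,l\ge 1$, $t\in\mathbb{R}$, and a rational $\lambda = r/s$ such that $f(n)^k = n^{it}$ and $g(n)^l = n^{i\lambda t}$ for all $n$, with $t\ne 0$. Then the sequence $\{(f(n), g(n+1))\}_{n\ge 1}$ is not dense in $\mathbb{T}^2$. -/
open Complex Filter

def CompletelyMultiplicative (f : ℕ → ℂ) : Prop :=
  f 1 = 1 ∧ ∀ m n : ℕ, f (m * n) = f m * f n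

/-!
With `p = k r` and `q = l s`, both hypotheses become the same archimedean character:
`f(n)^p = n^{irt}` and `g(n+1)^q = (n+1)^{irt}`, so `f(n)^p / g(n+1)^q → 1`.
The torus has no isolated points, so a sequence dense in it clusters at every point of it;
by continuity of `(z, w) ↦ z^p / w^q` this map would equal `1` on the whole torus,
but it equals `-1` at `(1, e^{iπ/q})`.
-/

open Topology Set Metric

theorem Preperfect.subset_of_subset_union_of_finite {X : Type*} [TopologicalSpace X] [T1Space X]
    {S F C : Set X} (hS : Preperfect S) (hF : F.Finite) (hC : IsClosed C) (h : S ⊆ F ∪ C) :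
    S ⊆ C := by
  intro x hx
  by_contra hxC
  have hU : Cᶜ ∩ (F \ {x})ᶜ ∈ 𝓝 x :=
    inter_mem (hC.isOpen_compl.mem_nhds hxC)
      ((hF.sdiff.isClosed.isOpen_compl).mem_nhds fun hx' => hx'.2 rfl)
  obtain ⟨y, ⟨⟨hyC, hyF⟩, hyS⟩, hyx⟩ := preperfect_iff_nhds.1 hS x hx _ hU
  exact hyF ⟨(h hyS).resolve_right hyC, hyx⟩

theorem Preperfect.mapClusterPt_of_subset_closure_range {X : Type*} [TopologicalSpace X]
    [T1Space X] {S : Set X} (hS : Preperfect S) {u : ℕ → X} (hu : S ⊆ closure (range u))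
    {x : X} (hx : x ∈ S) : MapClusterPt x atTop u := by
  rw [mapClusterPt_atTop_iff_forall_mem_closure]
  intro N
  have hfin : (u '' Iio N).Finite := (finite_Iio N).image u
  refine hS.subset_of_subset_union_of_finite hfin isClosed_closure ?_ hx
  calc S ⊆ closure (range u) := hu
    _ = closure (u '' Iio N ∪ u '' Ici N) := by rw [← image_union, Iio_union_Ici, image_univ]
    _ = u '' Iio N ∪ closure (u '' Ici N) := by rw [closure_union, hfin.isClosed.closure_eq]

theorem MapClusterPt.eq_of_tendsto {α X : Type*} [TopologicalSpace X] [T2Space X] {F : Filter α}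
    {u : α → X} {x y : X} (hx : MapClusterPt x F u) (hy : Tendsto u F (𝓝 y)) : x = y := by
  by_contra hne
  exact (hx.clusterPt.mono hy).ne (disjoint_nhds_nhds.2 hne).eq_bot

theorem preperfect_sphere_prod_sphere : Preperfect (sphere (0 : ℂ) 1 ×ˢ sphere (0 : ℂ) 1) := by
  have hS : IsConnected (sphere (0 : ℂ) 1) := isConnected_sphere (by simp) 0 zero_le_one
  refine (hS.prod hS).isPreconnected.preperfect_of_nontrivial ⟨(1, 1), ?_, (-1, 1), ?_, ?_⟩ <;>
    norm_num

theorem prod_subset_closure_range_of_forall_exists_norm_add_lt {E F : Type*}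
    [SeminormedAddCommGroup E] [SeminormedAddCommGroup F] {u : ℕ → E} {v : ℕ → F}
    {S : Set E} {T : Set F}
    (h : ∀ z ∈ S, ∀ w ∈ T, ∀ ε > 0, ∃ n, ‖u n - z‖ + ‖v n - w‖ < ε) :
    S ×ˢ T ⊆ closure (range fun n => (u n, v n)) := by
  rintro ⟨z, w⟩ ⟨hz, hw⟩
  refine Metric.mem_closure_iff.2 fun ε hε => ?_
  obtain ⟨n, hn⟩ := h z hz w hw ε hε
  refine ⟨_, ⟨n, rfl⟩, ?_⟩
  rw [Prod.dist_eq, dist_comm z, dist_comm w, dist_eq_norm, dist_eq_norm]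
  exact max_lt (by linarith [norm_nonneg (v n - w)]) (by linarith [norm_nonneg (u n - z)])

theorem zpow_natCast_mul_eq_cpow {z x y : ℂ} {k : ℕ} (h : z ^ k = x ^ y) (m : ℤ) :
    z ^ ((k : ℤ) * m) = x ^ (m * y) := by
  rw [zpow_mul, zpow_natCast, h, cpow_int_mul]

theorem tendsto_natCast_cpow_div_succ_cpow (c : ℝ) :
    Tendsto (fun n : ℕ => (n : ℂ) ^ (I * c) / ((n + 1 : ℕ) : ℂ) ^ (I * c)) atTop (𝓝 1) := by
  have hlog : Tendsto (fun n : ℕ => cexp ((Real.log n - Real.log (n + 1) : ℝ) * (I * c)))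
      atTop (𝓝 1) := by
    have := ((Real.tendsto_log_nat_add_one_sub_log.neg).ofReal.mul_const (I * c)).cexp
    simpa using this
  refine hlog.congr' ?_
  filter_upwards [eventually_ge_atTop 1] with n hn
  have h0 : (n : ℂ) ≠ 0 := by exact_mod_cast (by omega : n ≠ 0)
  rw [cpow_def_of_ne_zero h0, cpow_def_of_ne_zero (Nat.cast_ne_zero.2 n.succ_ne_zero), ← exp_sub,
    ← sub_mul, ← natCast_log, ← natCast_log]
  push_cast
  ring_nf

theorem not_sphere_prod_sphere_subset_closure_range_of_tendsto_zpow_div_zpow {u v : ℕ → ℂ}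
    {p q : ℤ} (hq : q ≠ 0) (h : Tendsto (fun n => u n ^ p / v n ^ q) atTop (𝓝 1)) :
    ¬ sphere (0 : ℂ) 1 ×ˢ sphere (0 : ℂ) 1 ⊆ closure (range fun n => (u n, v n)) := by
  intro hsub
  set w := cexp ((Real.pi / q : ℝ) * I)
  have hw : w ∈ sphere (0 : ℂ) 1 := mem_sphere_zero_iff_norm.2 (norm_exp_ofReal_mul_I _)
  have hwq : w ^ q = -1 := by
    rw [← exp_int_mul, ← exp_pi_mul_I]
    congr 1
    push_cast
    field_simp
  have hΦ : ContinuousAt (fun x : ℂ × ℂ => x.1 ^ p / x.2 ^ q) (1, w) := by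
    refine (continuousAt_fst.zpow₀ p (.inl one_ne_zero)).div₀
      (continuousAt_snd.zpow₀ q (.inl (exp_ne_zero _))) ?_
    simp [hwq]
  have hcluster := (preperfect_sphere_prod_sphere.mapClusterPt_of_subset_closure_range hsub
    (mk_mem_prod (by simp) hw)).continuousAt_comp hΦ
  have := hcluster.eq_of_tendsto h
  norm_num [hwq] at this

theorem pair_not_dense_of_archimedean_rational_ratio_general
    (f g : ℕ → ℂ)
    (k l : ℕ) (hl : 1 ≤ l) (t : ℝ)
    (r s : ℤ) (hs : s ≠ 0)
    (hfk : ∀ n ≥ 1, (f n) ^ k = (n : ℂ) ^ (Complex.I * (t : ℂ)))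
    (hgl : ∀ n ≥ 1, (g n) ^ l = (n : ℂ) ^ (Complex.I * (((r : ℝ) / (s : ℝ)) * t : ℝ))) :
    ¬ (∀ z w : ℂ, ‖z‖ = 1 → ‖w‖ = 1 → ∀ ε > 0,
        ∃ n ≥ 1, ‖f n - z‖ + ‖g (n + 1) - w‖ < ε) := by
  intro hdense
  have hq : (l : ℤ) * s ≠ 0 := mul_ne_zero (by omega) hs
  refine not_sphere_prod_sphere_subset_closure_range_of_tendsto_zpow_div_zpow (p := k * r) hq ?_
    (prod_subset_closure_range_of_forall_exists_norm_add_lt fun z hz w hw ε hε =>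
      (hdense z w (by simpa using hz) (by simpa using hw) ε hε).imp fun _ => And.right)
  refine (tendsto_natCast_cpow_div_succ_cpow (r * t)).congr' ?_
  filter_upwards [eventually_ge_atTop 1] with n hn
  rw [zpow_natCast_mul_eq_cpow (hfk n hn), zpow_natCast_mul_eq_cpow (hgl (n + 1) (by omega))]
  congr 2 <;> push_cast <;> field_simp

theorem pair_not_dense_of_archimedean_rational_ratio
    (f g : ℕ → ℂ) (hf : CompletelyMultiplicative f) (hg : CompletelyMultiplicative g)
    (hfT : ∀ n ≥ 1, ‖f n‖ = 1) (hgT : ∀ n ≥ 1, ‖g n‖ = 1)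
    (k l : ℕ) (hk : 1 ≤ k) (hl : 1 ≤ l) (t : ℝ) (ht : t ≠ 0)
    (r s : ℤ) (hs : s ≠ 0)
    (hfk : ∀ n ≥ 1, (f n) ^ k = (n : ℂ) ^ (Complex.I * (t : ℂ)))
    (hgl : ∀ n ≥ 1, (g n) ^ l = (n : ℂ) ^ (Complex.I * (((r : ℝ) / (s : ℝ)) * t : ℝ))) :
    ¬ (∀ z w : ℂ, ‖z‖ = 1 → ‖w‖ = 1 → ∀ ε > 0,
        ∃ n ≥ 1, ‖f n - z‖ + ‖g (n + 1) - w‖ < ε) :=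
  pair_not_dense_of_archimedean_rational_ratio_general f g k l hl t r s hs hfk hgl
end

section
/- Suppose $f:\mathbb{N}\to\mathbb{T}$ is completely multiplicative and there is no pair $(m,u)\in\mathbb{N}\times\mathbb{R}$ with $f(n)^m = n^{iu}$ for all $n$. If for every prime $p\le N$ there exist $m_p\ge 1$ and $u_p\in\mathbb{R}$ with $f(p)^{k m_p} = p^{i u_p}$, and additionally $f(p)^k = p^{it}$ for all primes $p> N$, then there exists a prime $p_0 \le N$ such that $f(p_0)^k p_0^{-it}$ is not a root of unity of any order. -/
/-!
If every twisted value `f(p)^k p^{-it}` with `p ≤ N` had finite order, a common multiple `M` of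
these finitely many orders would give `f(p)^{kM} = p^{itM}` for the primes `p ≤ N`; for `p > N`
this already holds by assumption. By complete multiplicativity, `f(n)^{kM} = n^{itM}` for every
`n ≥ 1`, which is excluded.
-/

open Complex Filter

namespace CompletelyMultiplicative

variable {f g : ℕ → ℂ}

lemma pow (hf : CompletelyMultiplicative f) (K : ℕ) :
    CompletelyMultiplicative (fun n => f n ^ K) :=
  ⟨by simp [hf.1], fun m n => by simp [hf.2, mul_pow]⟩

lemma natCast_cpow (s : ℂ) : CompletelyMultiplicative (fun n : ℕ => (n : ℂ) ^ s) :=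
  ⟨by simp, fun m n => by simpa using natCast_mul_natCast_cpow m n s⟩

lemma eq_of_eq_on_primes (hf : CompletelyMultiplicative f) (hg : CompletelyMultiplicative g)
    (h : ∀ p : ℕ, p.Prime → f p = g p) {n : ℕ} (hn : n ≠ 0) : f n = g n := by
  induction n using Nat.recOnMul with
  | zero => exact absurd rfl hn
  | one => rw [hf.1, hg.1]
  | prime p hp => exact h p hp
  | mul a b iha ihb =>
    rw [hf.2, hg.2, iha (left_ne_zero_of_mul hn), ihb (right_ne_zero_of_mul hn)]

end CompletelyMultiplicative

lemma Finset.exists_pos_forall_pow_eq_one {ι G : Type*} [Monoid G] (s : Finset ι) {z : ι → G}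
    (hz : ∀ i ∈ s, IsOfFinOrder (z i)) : ∃ M : ℕ, 0 < M ∧ ∀ i ∈ s, z i ^ M = 1 :=
  ⟨∏ i ∈ s, orderOf (z i), Finset.prod_pos fun i hi => (hz i hi).orderOf_pos,
    fun _ hi => orderOf_dvd_iff_pow_eq_one.mp (Finset.dvd_prod_of_mem _ hi)⟩

lemma pow_eq_pow_of_mul_inv_pow_eq_one {G₀ : Type*} [CommGroupWithZero G₀] {a b : G₀}
    {n : ℕ} (hb : b ≠ 0) (h : (a * b⁻¹) ^ n = 1) : a ^ n = b ^ n := by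
  rwa [mul_pow, inv_pow, mul_inv_eq_one₀ (pow_ne_zero n hb)] at h

lemma cpow_I_mul_ofReal_mul_natCast (x : ℂ) (t : ℝ) (M : ℕ) :
    x ^ (I * ((t * M : ℝ) : ℂ)) = (x ^ (I * (t : ℂ))) ^ M := by
  rw [← cpow_mul_nat]
  push_cast
  ring_nf

theorem exists_prime_with_nonrootofunity_twist_general
    (f : ℕ → ℂ) (hf : CompletelyMultiplicative f)
    (k N : ℕ) (hk : 1 ≤ k) (t : ℝ)
    (hnot : ¬ ∃ m : ℕ, 1 ≤ m ∧ ∃ u : ℝ, ∀ n ≥ 1,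
        (f n) ^ m = (n : ℂ) ^ (Complex.I * (u : ℂ)))
    (hlarge : ∀ p : ℕ, p.Prime → N < p →
        (f p) ^ k = (p : ℂ) ^ (Complex.I * (t : ℂ))) :
    ∃ p₀ : ℕ, p₀.Prime ∧ p₀ ≤ N ∧
      ∀ m : ℕ, 1 ≤ m →
        ((f p₀) ^ k * (p₀ : ℂ) ^ (-(Complex.I * (t : ℂ)))) ^ m ≠ 1 := by
  by_contra! hroot
  obtain ⟨M, hM, hMroot⟩ := Finset.exists_pos_forall_pow_eq_one {p ∈ Finset.Iic N | p.Prime}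
    (z := fun p => f p ^ k * (p : ℂ) ^ (-(I * (t : ℂ)))) fun p hp => by
      rw [Finset.mem_filter, Finset.mem_Iic] at hp
      exact isOfFinOrder_iff_pow_eq_one.mpr (hroot p hp.2 hp.1)
  have hprime : ∀ p : ℕ, p.Prime →
      f p ^ (k * M) = (p : ℂ) ^ (I * ((t * M : ℝ) : ℂ)) := by
    intro p hp
    rw [pow_mul, cpow_I_mul_ofReal_mul_natCast]
    rcases le_or_gt p N with hpN | hpN
    · have hne : (p : ℂ) ^ (I * (t : ℂ)) ≠ 0 :=
        cpow_ne_zero_iff.mpr (.inl (Nat.cast_ne_zero.mpr hp.ne_zero))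
      refine pow_eq_pow_of_mul_inv_pow_eq_one hne ?_
      rw [← cpow_neg]
      exact hMroot p (by simp [hp, hpN])
    · rw [hlarge p hp hpN]
  refine hnot ⟨k * M, Nat.mul_pos hk hM, t * M, fun n hn => ?_⟩
  exact (hf.pow (k * M)).eq_of_eq_on_primes (CompletelyMultiplicative.natCast_cpow _) hprime
    (Nat.one_le_iff_ne_zero.mp hn)

theorem exists_prime_with_nonrootofunity_twist
    (f : ℕ → ℂ) (hf : CompletelyMultiplicative f) (hfT : ∀ n ≥ 1, ‖f n‖ = 1)
    (k N : ℕ) (hk : 1 ≤ k) (t : ℝ)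
    (hnot : ¬ ∃ m : ℕ, 1 ≤ m ∧ ∃ u : ℝ, ∀ n ≥ 1,
        (f n) ^ m = (n : ℂ) ^ (Complex.I * (u : ℂ)))
    (hsmall : ∀ p : ℕ, p.Prime → p ≤ N → ∃ m : ℕ, 1 ≤ m ∧ ∃ u : ℝ,
        (f p) ^ (k * m) = (p : ℂ) ^ (Complex.I * (u : ℂ)))
    (hlarge : ∀ p : ℕ, p.Prime → N < p →
        (f p) ^ k = (p : ℂ) ^ (Complex.I * (t : ℂ))) :
    ∃ p₀ : ℕ, p₀.Prime ∧ p₀ ≤ N ∧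
      ∀ m : ℕ, 1 ≤ m →
        ((f p₀) ^ k * (p₀ : ℂ) ^ (-(Complex.I * (t : ℂ)))) ^ m ≠ 1 :=
  exists_prime_with_nonrootofunity_twist_general f hf k N hk t hnot hlarge
end

section
/- Let $f:\mathbb{N}\to\mathbb{T}$ be completely multiplicative. Suppose that for every integer $M\ge 1$ there is a prime $p$ such that $f(p) = \xi_p\, p^{iu}$ where $\xi_p = e(a/b)$ is a root of unity with $\gcd(a,b)=1$ and $b > Mk$. Then for every $z\in\mathbb{T}$, every $\eta>0$, every $\delta>0$ and $u\in\mathbb{R}$ with $u=0$, there exist a prime $p$ and $m\in\mathbb{N}$ with $k\mid m$ such that $|f(p)^m - z| < \eta$ and $|p^{ium}-1|<\delta$. -/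
open Complex Filter

noncomputable def e (t : ℝ) : ℂ := Complex.exp (2 * Real.pi * Complex.I * t)

/-!
With `u = 0` we have `f p = e (a / b)` for a prime `p` with `b > M k`. Write `z = e γ`, round
`γ b / k` to an integer `ℓ`, so that `|k ℓ / b - γ| ≤ k / (2 b)`, and solve `a r ≡ ℓ (mod b)`
with `r ≥ 1`. Then `f p ^ (k r) = e (k a r / b) = e (k ℓ / b)` lies within `π k / b < π / M` of `z`.
-/

open Real

lemma e_eq_exp_I_mul (t : ℝ) : e t = exp (I * ↑(2 * π * t)) := by
  rw [e]; push_cast; ring_nf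

lemma norm_e (t : ℝ) : ‖e t‖ = 1 := by
  rw [e_eq_exp_I_mul, norm_exp_I_mul_ofReal]

lemma e_pow (t : ℝ) (n : ℕ) : e t ^ n = e (n * t) := by
  rw [e, e, ← Complex.exp_nat_mul]; push_cast; ring_nf

lemma e_add_int (t : ℝ) (n : ℤ) : e (t + n) = e t := by
  have h : 2 * (π : ℂ) * I * ↑(t + n) = 2 * π * I * t + n * (2 * π * I) := by push_cast; ring
  rw [e, e, h, Complex.exp_add, Complex.exp_int_mul_two_pi_mul_I, mul_one]

lemma norm_e_sub_e_le (s t : ℝ) : ‖e s - e t‖ ≤ 2 * π * |s - t| := by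
  have h : e s - e t = e t * (exp (I * ↑(2 * π * (s - t))) - 1) := by
    rw [e_eq_exp_I_mul, e_eq_exp_I_mul, mul_sub, mul_one, ← Complex.exp_add]
    push_cast; ring_nf
  rw [h, norm_mul, norm_e, one_mul]
  refine norm_exp_I_mul_ofReal_sub_one_le.trans_eq ?_
  rw [Real.norm_eq_abs, abs_mul, abs_of_pos (by positivity : (0 : ℝ) < 2 * π)]

lemma e_arg_div_two_pi {z : ℂ} (hz : ‖z‖ = 1) : e (arg z / (2 * π)) = z := by
  conv_rhs => rw [← norm_mul_exp_arg_mul_I z, hz]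
  rw [e]; push_cast
  field_simp

lemma Int.exists_pos_mul_modEq {a : ℤ} {b : ℕ} (hb : 0 < b) (hab : IsCoprime a b) (ℓ : ℤ) :
    ∃ r : ℕ, 0 < r ∧ a * r ≡ ℓ [ZMOD b] := by
  obtain ⟨x, y, hxy⟩ := hab
  have hsol : a * (x * ℓ) ≡ ℓ [ZMOD b] :=
    Int.modEq_iff_dvd.2 ⟨y * ℓ, by linear_combination -ℓ * hxy⟩
  refine ⟨(x * ℓ % b).toNat + b, by omega, ?_⟩
  have hr : (((x * ℓ % b).toNat + b : ℕ) : ℤ) ≡ x * ℓ [ZMOD b] := by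
    rw [Nat.cast_add, Int.toNat_of_nonneg (Int.emod_nonneg _ (by omega))]
    exact Int.add_modEq_right.trans (Int.mod_modEq _ _)
  exact (hr.mul_left a).trans hsol

lemma exists_e_div_pow_mul_near {a : ℤ} {b k : ℕ} (hb : 0 < b) (hk : 0 < k)
    (hab : IsCoprime a b) (γ : ℝ) :
    ∃ r : ℕ, 0 < r ∧ ‖e (a / b) ^ (k * r) - e γ‖ ≤ π * k / b := by
  set ℓ := round (γ * b / k)
  obtain ⟨r, hr, hmod⟩ := Int.exists_pos_mul_modEq hb hab ℓ
  obtain ⟨t, ht⟩ := hmod.symm.dvd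
  have hb' : (0 : ℝ) < b := by exact_mod_cast hb
  have hk' : (0 : ℝ) < k := by exact_mod_cast hk
  have hpow : e (a / b) ^ (k * r) = e (k * ℓ / b) := by
    have ht' : (a : ℝ) * r = ℓ + b * t := by exact_mod_cast eq_add_of_sub_eq' ht
    rw [e_pow, ← e_add_int (k * ℓ / b) (k * t)]
    congr 1
    push_cast
    field_simp
    linear_combination ht'
  have hround : |k * ℓ / b - γ| ≤ k / b * (1 / 2) := by
    calc |k * ℓ / b - γ| = k / b * |γ * b / k - ℓ| := by
          rw [abs_sub_comm, ← abs_of_pos (by positivity : (0 : ℝ) < k / b), ← abs_mul]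
          congr 1
          field_simp
      _ ≤ k / b * (1 / 2) := by gcongr; exact abs_sub_round _
  refine ⟨r, hr, ?_⟩
  calc ‖e (a / b) ^ (k * r) - e γ‖ ≤ 2 * π * |k * ℓ / b - γ| := hpow ▸ norm_e_sub_e_le _ _
    _ ≤ 2 * π * (k / b * (1 / 2)) := by gcongr
    _ = π * k / b := by ring

theorem steering_values_at_primes_unbounded_order_general
    (f : ℕ → ℂ)
    (k : ℕ) (hk : 1 ≤ k) (u : ℝ) (hu : u = 0)
    (hbig : ∀ M : ℕ, 1 ≤ M → ∃ p : ℕ, p.Prime ∧ ∃ a : ℤ, ∃ b : ℕ, 1 ≤ b ∧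
        Int.gcd a (b : ℤ) = 1 ∧ M * k < b ∧
        f p = e ((a : ℝ) / (b : ℝ)) * (p : ℂ) ^ (Complex.I * (u : ℂ))) :
    ∀ z : ℂ, ‖z‖ = 1 → ∀ η > (0 : ℝ), ∀ δ > (0 : ℝ),
      ∃ p : ℕ, p.Prime ∧ ∃ m : ℕ, 1 ≤ m ∧ k ∣ m ∧
        ‖(f p) ^ m - z‖ < η ∧
        ‖(p : ℂ) ^ (Complex.I * ((u * m : ℝ) : ℂ)) - 1‖ < δ := by
  subst hu
  intro z hz η hη δ hδ
  obtain ⟨M, hM⟩ := exists_nat_gt (π / η)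
  have hM1 : 1 ≤ M := Nat.cast_pos.1 ((div_pos pi_pos hη).trans hM)
  obtain ⟨p, hp, a, b, hb, hab, hMk, hfp⟩ := hbig M hM1
  obtain ⟨r, hr, hnear⟩ := exists_e_div_pow_mul_near hb hk (Int.isCoprime_iff_gcd_eq_one.2 hab)
    (arg z / (2 * π))
  have hbound : π * k / b < η := by
    have hMk' : (M : ℝ) * k < b := by exact_mod_cast hMk
    rw [div_lt_iff₀ hη] at hM
    rw [div_lt_iff₀ (by exact_mod_cast hb)]
    have hk' : (1 : ℝ) ≤ k := by exact_mod_cast hk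
    nlinarith
  refine ⟨p, hp, k * r, Nat.mul_pos hk hr, dvd_mul_right k r, ?_, by simpa using hδ⟩
  rw [hfp, ofReal_zero, mul_zero, cpow_zero, mul_one, ← e_arg_div_two_pi hz]
  exact hnear.trans_lt hbound

theorem steering_values_at_primes_unbounded_order
    (f : ℕ → ℂ) (hf : CompletelyMultiplicative f) (hfT : ∀ n ≥ 1, ‖f n‖ = 1)
    (k : ℕ) (hk : 1 ≤ k) (u : ℝ) (hu : u = 0)
    (hbig : ∀ M : ℕ, 1 ≤ M → ∃ p : ℕ, p.Prime ∧ ∃ a : ℤ, ∃ b : ℕ, 1 ≤ b ∧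
        Int.gcd a (b : ℤ) = 1 ∧ M * k < b ∧
        f p = e ((a : ℝ) / (b : ℝ)) * (p : ℂ) ^ (Complex.I * (u : ℂ))) :
    ∀ z : ℂ, ‖z‖ = 1 → ∀ η > (0 : ℝ), ∀ δ > (0 : ℝ),
      ∃ p : ℕ, p.Prime ∧ ∃ m : ℕ, 1 ≤ m ∧ k ∣ m ∧
        ‖(f p) ^ m - z‖ < η ∧
        ‖(p : ℂ) ^ (Complex.I * ((u * m : ℝ) : ℂ)) - 1‖ < δ :=
  steering_values_at_primes_unbounded_order_general f k hk u hu hbig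
end
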